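/- The sequence space c₀^λ(F̂) is not contained in ℓ∞: there exists a sequence x (namely x_n = f_{n+1}²) with x ∈ c₀^λ(F̂) but x unbounded. -/

import Mathlib

open Filter Finset

noncomputable def fibR : ℕ → ℝ
  | 0 => 1
  | 1 => 1
  | (n + 2) => fibR (n + 1) + fibR n

noncomputable def Fhat (x : ℕ → ℝ) (n : ℕ) : ℝ :=
  fibR n / fibR (n + 1) * x n - fibR (n + 1) / fibR n * (if n = 0 then 0 else x (n - 1))

noncomputable def Fbar (Λ : ℕ → ℝ) (x : ℕ → ℝ) (n : ℕ) : ℝ :=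
  (1 / Λ n) * ∑ k ∈ Finset.range (n + 1),
    (Λ k - if k = 0 then 0 else Λ (k - 1)) *
      (fibR k / fibR (k + 1) * x k -
        fibR (k + 1) / fibR k * (if k = 0 then 0 else x (k - 1)))

/-!
With `x n = f (n+1)²` every term `(f k / f (k+1)) x k - (f (k+1) / f k) x (k-1)` with `k ≥ 1`
equals `f k f (k+1) - f (k+1) f k = 0`, so the weighted mean collapses to `λ 0 / λ n → 0`,
while `x` grows like the Fibonacci numbers.
-/

lemma fibR_eq_fib (n : ℕ) : fibR n = Nat.fib (n + 1) := by
  induction n using Nat.twoStepInduction with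
  | zero => simp [fibR]
  | one => simp [fibR, Nat.fib_two]
  | more n ih₀ ih₁ => rw [fibR, ih₀, ih₁, Nat.fib_add_two (n := n + 1)]; push_cast; ring

lemma fibR_pos (n : ℕ) : 0 < fibR n := by
  rw [fibR_eq_fib]
  exact_mod_cast Nat.fib_pos.mpr n.succ_pos

lemma tendsto_fibR_atTop : Tendsto fibR atTop atTop := by
  have hfib : Tendsto (fun n => Nat.fib (n + 2)) atTop atTop :=
    Nat.fib_add_two_strictMono.tendsto_atTop
  have : Tendsto (fun n => fibR (n + 1)) atTop atTop := by
    simp_rw [fibR_eq_fib]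
    exact tendsto_natCast_atTop_atTop.comp hfib
  exact (tendsto_add_atTop_iff_nat 1).mp this

lemma Fbar_eq_sum_Fhat (Λ x : ℕ → ℝ) (n : ℕ) :
    Fbar Λ x n = (1 / Λ n) *
      ∑ k ∈ range (n + 1), (Λ k - if k = 0 then 0 else Λ (k - 1)) * Fhat x k :=
  rfl

lemma Fbar_eq_of_Fhat_succ_eq_zero {x : ℕ → ℝ} (hx : ∀ k, Fhat x (k + 1) = 0)
    (Λ : ℕ → ℝ) (n : ℕ) : Fbar Λ x n = Λ 0 * Fhat x 0 / Λ n := by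
  rw [Fbar_eq_sum_Fhat, sum_range_succ']
  simp [hx, div_eq_inv_mul]

lemma Fhat_fibR_sq_succ (k : ℕ) : Fhat (fun n => fibR (n + 1) ^ 2) (k + 1) = 0 := by
  have h₁ := (fibR_pos (k + 1)).ne'
  have h₂ := (fibR_pos (k + 2)).ne'
  simp only [Fhat, Nat.succ_ne_zero, if_false, Nat.add_sub_cancel]
  field_simp
  ring

lemma Fhat_fibR_sq_zero : Fhat (fun n => fibR (n + 1) ^ 2) 0 = 1 := by
  simp [Fhat, fibR]

theorem c0lambdaF_not_subset_linf_general (Λ : ℕ → ℝ) (hlim : Tendsto Λ atTop atTop) :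
    ∃ x : ℕ → ℝ, (∀ n, x n = fibR (n + 1) ^ 2) ∧
      Tendsto (Fbar Λ x) atTop (nhds 0) ∧ ¬ ∃ M : ℝ, ∀ n, |x n| ≤ M := by
  refine ⟨fun n => fibR (n + 1) ^ 2, fun n => rfl, ?_, ?_⟩
  · have hFbar : Fbar Λ (fun n => fibR (n + 1) ^ 2) = fun n => Λ 0 / Λ n := by
      ext n
      rw [Fbar_eq_of_Fhat_succ_eq_zero Fhat_fibR_sq_succ, Fhat_fibR_sq_zero, mul_one]
    rw [hFbar]
    exact hlim.const_div_atTop (Λ 0)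
  · rintro ⟨M, hM⟩
    have hx : Tendsto (fun n => fibR (n + 1) ^ 2) atTop atTop :=
      (tendsto_pow_atTop two_ne_zero).comp ((tendsto_add_atTop_iff_nat 1).mpr tendsto_fibR_atTop)
    obtain ⟨n, hn⟩ := (hx.eventually_gt_atTop M).exists
    exact (hn.trans_le (le_abs_self _)).not_ge (hM n)

theorem c0lambdaF_not_subset_linf (Λ : ℕ → ℝ) (hmono : StrictMono Λ)
    (hpos : ∀ k, 0 < Λ k) (hlim : Tendsto Λ atTop atTop) :
    ∃ x : ℕ → ℝ, (∀ n, x n = fibR (n + 1) ^ 2) ∧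
      Tendsto (Fbar Λ x) atTop (nhds 0) ∧ ¬ ∃ M : ℝ, ∀ n, |x n| ≤ M :=
  c0lambdaF_not_subset_linf_general Λ hlim
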